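/- Let r > 0 and let x ∈ K₁⁺ with ‖x‖₁ > r. Then for every d > 0, the Mordukhovich (Fréchet) coderivative of the metric projection P_{rB} at the point (x, (r/‖x‖₁)·x) evaluated at the constant sequence β_d satisfies D̂*P_{rB}(x, (r/‖x‖₁)·x)(β_d) = ∅. -/

import Mathlib

open scoped ENNReal

/-- The real Banach space `ℓ¹` of absolutely summable real sequences. -/
noncomputable abbrev ell1 : Type := lp (fun _ : ℕ => ℝ) 1

/-- The real Banach space `ℓ∞` of bounded real sequences (the dual of `ℓ¹`). -/
noncomputable abbrev ellInfty : Type := lp (fun _ : ℕ => ℝ) ∞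

/-- The canonical pairing `⟨φ, x⟩ = ∑ₙ φₙ xₙ` between `ℓ∞` and `ℓ¹`. -/
noncomputable def pairing (φ : ellInfty) (x : ell1) : ℝ := ∑' n, φ n * x n

/-- The constant sequence `β_a = (a, a, a, …) ∈ ℓ∞`. -/
noncomputable def betaSeq (a : ℝ) : ellInfty :=
  ⟨fun _ => a, memℓp_infty (bddAbove_singleton.mono Set.range_const_subset)⟩

/-- The set of best approximations of `x` from the closed ball of radius `r`
centered at the origin of `ℓ¹`: `P_{rB}(x) = {u ∈ rB : ‖x − u‖₁ ≤ ‖x − z‖₁ for all z ∈ rB}`. -/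
def projBall (r : ℝ) (x : ell1) : Set ell1 :=
  {u : ell1 | ‖u‖ ≤ r ∧ ∀ z : ell1, ‖z‖ ≤ r → ‖x - u‖ ≤ ‖x - z‖}

/-- `ψ` belongs to the Mordukhovich (Fréchet) coderivative `D̂*P(x, y)(φ)` of the set-valued map
`P : ℓ¹ ⇉ ℓ¹` at `(x, y)` evaluated at `φ`:
`limsup_{(u,v)→(x,y), v ∈ P(u)} (⟨ψ, u − x⟩ − ⟨φ, v − y⟩)/(‖u − x‖ + ‖v − y‖) ≤ 0`. -/
def inCoderiv (P : ell1 → Set ell1) (x y : ell1) (ψ φ : ellInfty) : Prop :=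
  ∀ ε > (0 : ℝ), ∃ δ > (0 : ℝ), ∀ u v : ell1, v ∈ P u → ‖u - x‖ < δ → ‖v - y‖ < δ →
    pairing ψ (u - x) - pairing φ (v - y) ≤ ε * (‖u - x‖ + ‖v - y‖)

/-!
Write `y = c • x` with `c = r / ‖x‖ ≤ 1`. In `ℓ¹`, a point `v` of norm `r` is a nearest point of
`rB` to `u` as soon as `u - v` and `v` have coordinatewise the same sign, so many perturbations
of `(x, y)` along a single coordinate `n` stay on the graph of `P_{rB}`. Pushing `xₙ` up while
keeping `y` shows that every `ψ` in the coderivative has `ψₙ ≤ 0`. Then, for a coordinate with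
small `a = xₙ > 0`, the pair `(x - (a + c a) eₙ, y - 2 c a eₙ)` is on the graph; along it the
Fréchet quotient is at least `2 c a d / (a + 3 c a) ≥ c d / 2`, which does not tend to `0`.
-/

namespace lp

variable {α : Type*}

theorem one_norm_eq_tsum_abs (f : lp (fun _ : α => ℝ) 1) : ‖f‖ = ∑' i, |f i| := by
  simpa using norm_eq_tsum_rpow (p := 1) (by norm_num) f

theorem one_summable_abs (f : lp (fun _ : α => ℝ) 1) : Summable fun i => |f i| := by
  simpa using (lp.memℓp f).summable (p := 1) (by norm_num)

theorem one_norm_add_of_mul_nonneg (f g : lp (fun _ : α => ℝ) 1) (h : ∀ i, 0 ≤ f i * g i) :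
    ‖f + g‖ = ‖f‖ + ‖g‖ := by
  simp only [one_norm_eq_tsum_abs, coeFn_add, Pi.add_apply,
    fun i => (abs_add_eq_add_abs_iff (f i) (g i)).2 (mul_nonneg_iff.1 (h i))]
  exact (one_summable_abs f).tsum_add (one_summable_abs g)

theorem one_norm_eq_of_abs_eq {f g : lp (fun _ : α => ℝ) 1} (h : ∀ i, |f i| = |g i|) :
    ‖f‖ = ‖g‖ := by
  simp only [one_norm_eq_tsum_abs, h]

end lp

theorem pairing_single (ψ : ellInfty) (n : ℕ) (s : ℝ) :
    pairing ψ (lp.single 1 n s) = ψ n * s := by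
  rw [pairing, tsum_eq_single n fun m hm => by simp [hm]]
  simp

/-- Same-sign coordinates make `‖u‖ = ‖u - v‖ + ‖v‖`, so no point of the ball is closer to `u`. -/
theorem mem_projBall_of_mul_nonneg {r : ℝ} {u v : ell1} (hv : ‖v‖ = r)
    (h : ∀ n, 0 ≤ (u - v) n * v n) : v ∈ projBall r u := by
  have huv : ‖u‖ = ‖u - v‖ + ‖v‖ := by
    simpa using lp.one_norm_add_of_mul_nonneg (u - v) v h
  exact ⟨hv.le, fun z hz => by linarith [norm_sub_norm_le u z]⟩

section Projection

variable {r c : ℝ} {x : ell1}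

theorem smul_mem_projBall_add_single (hx : ∀ m, 0 ≤ x m) (hc0 : 0 ≤ c) (hc1 : c ≤ 1)
    (hcr : c * ‖x‖ = r) (n : ℕ) {t : ℝ} (ht : 0 ≤ t) :
    c • x ∈ projBall r (x + lp.single 1 n t) := by
  refine mem_projBall_of_mul_nonneg (by rw [norm_smul, Real.norm_of_nonneg hc0, hcr]) fun m => ?_
  have hxm := hx m
  refine mul_nonneg ?_ (mul_nonneg hc0 hxm)
  rcases eq_or_ne m n with rfl | hmn
  · simp only [lp.coeFn_add, lp.coeFn_sub, lp.coeFn_smul, lp.coeFn_single, Pi.add_apply,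
      Pi.sub_apply, Pi.smul_apply, smul_eq_mul, Pi.single_eq_same]
    nlinarith
  · simp only [lp.coeFn_add, lp.coeFn_sub, lp.coeFn_smul, lp.coeFn_single, Pi.add_apply,
      Pi.sub_apply, Pi.smul_apply, smul_eq_mul, Pi.single_eq_of_ne hmn]
    nlinarith

theorem smul_add_single_mem_projBall_add_single (hx : ∀ m, 0 ≤ x m) (hc0 : 0 ≤ c)
    (hc1 : c ≤ 1) (hcr : c * ‖x‖ = r) (n : ℕ) :
    c • x + lp.single 1 n (-(2 * (c * x n))) ∈
      projBall r (x + lp.single 1 n (-(x n + c * x n))) := by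
  have hv : ‖c • x + lp.single 1 n (-(2 * (c * x n)))‖ = ‖c • x‖ := by
    refine lp.one_norm_eq_of_abs_eq fun m => ?_
    rcases eq_or_ne m n with rfl | hmn
    · simp only [lp.coeFn_add, lp.coeFn_smul, lp.coeFn_single, Pi.add_apply, Pi.smul_apply,
        smul_eq_mul, Pi.single_eq_same]
      rw [show c * x m + -(2 * (c * x m)) = -(c * x m) by ring, abs_neg]
    · simp only [lp.coeFn_add, lp.coeFn_smul, lp.coeFn_single, Pi.add_apply,
        Pi.single_eq_of_ne hmn, add_zero]
  refine mem_projBall_of_mul_nonneg (by rw [hv, norm_smul, Real.norm_of_nonneg hc0, hcr])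
    fun m => ?_
  rcases eq_or_ne m n with rfl | hmn
  · simp only [lp.coeFn_add, lp.coeFn_sub, lp.coeFn_smul, lp.coeFn_single, Pi.add_apply,
      Pi.sub_apply, Pi.smul_apply, smul_eq_mul, Pi.single_eq_same]
    exact le_of_eq (by ring)
  · simp only [lp.coeFn_add, lp.coeFn_sub, lp.coeFn_smul, lp.coeFn_single, Pi.add_apply,
      Pi.sub_apply, Pi.smul_apply, smul_eq_mul, Pi.single_eq_of_ne hmn, add_zero]
    have hxm := hx m
    nlinarith [mul_nonneg (mul_nonneg (sub_nonneg.2 hc1) hc0) (mul_self_nonneg (x m))]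

end Projection

theorem inCoderiv.le_of_single {P : ell1 → Set ell1} {x y : ell1} {ψ φ : ellInfty}
    (h : inCoderiv P x y ψ φ) {ε : ℝ} (hε : 0 < ε) :
    ∃ δ > 0, ∀ n s s', y + lp.single 1 n s' ∈ P (x + lp.single 1 n s) → |s| < δ → |s'| < δ →
      ψ n * s - φ n * s' ≤ ε * (|s| + |s'|) := by
  obtain ⟨δ, hδ, H⟩ := h ε hε
  refine ⟨δ, hδ, fun n s s' hmem hs hs' => ?_⟩
  have key := H _ _ hmem
  simp only [add_sub_cancel_left, lp.norm_single one_pos, Real.norm_eq_abs, pairing_single] at key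
  exact key hs hs'

section Coderivative

variable {r c : ℝ} {x : ell1} {ψ φ : ellInfty}

theorem apply_nonpos_of_inCoderiv (hx : ∀ m, 0 ≤ x m) (hc0 : 0 ≤ c) (hc1 : c ≤ 1)
    (hcr : c * ‖x‖ = r) (hψ : inCoderiv (projBall r) x (c • x) ψ φ) (n : ℕ) : ψ n ≤ 0 := by
  by_contra! hpos
  obtain ⟨δ, hδ, H⟩ := hψ.le_of_single (half_pos hpos)
  have hmem : c • x + lp.single 1 n 0 ∈ projBall r (x + lp.single 1 n (δ / 2)) := by
    simpa using smul_mem_projBall_add_single hx hc0 hc1 hcr n (half_pos hδ).le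
  have key := H n (δ / 2) 0 hmem (by rw [abs_of_pos (half_pos hδ)]; linarith) (by simpa using hδ)
  rw [abs_of_pos (half_pos hδ)] at key
  nlinarith

theorem not_inCoderiv_of_forall_le {d : ℝ} (hx : ∀ m, 0 < x m) (hc0 : 0 < c) (hc1 : c ≤ 1)
    (hcr : c * ‖x‖ = r) (hd : 0 < d) (hφ : ∀ m, d ≤ φ m) (hψ : ∀ m, ψ m ≤ 0) :
    ¬ inCoderiv (projBall r) x (c • x) ψ φ := by
  intro h
  obtain ⟨δ, hδ, H⟩ := h.le_of_single (by positivity : 0 < c * d / 4)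
  obtain ⟨n, hn⟩ := ((lp.one_summable_abs x).tendsto_atTop_zero.eventually
    (gt_mem_nhds (half_pos hδ))).exists
  set a := x n
  have ha : 0 < a := hx n
  have hca : c * a ≤ a := mul_le_of_le_one_left ha.le hc1
  rw [abs_of_pos ha] at hn
  have key := H n _ _ (smul_add_single_mem_projBall_add_single (fun m => (hx m).le) hc0.le hc1 hcr n)
  rw [abs_neg, abs_neg, abs_of_pos (by positivity), abs_of_pos (by positivity)] at key
  have hlhs : 2 * (c * a * d) ≤ ψ n * -(a + c * a) - φ n * -(2 * (c * a)) := by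
    nlinarith [mul_nonpos_of_nonpos_of_nonneg (hψ n) (by positivity : 0 ≤ a + c * a),
      mul_le_mul_of_nonneg_left (hφ n) (by positivity : 0 ≤ 2 * (c * a))]
  have hrhs : c * d / 4 * (a + c * a + 2 * (c * a)) ≤ c * a * d := by
    nlinarith [mul_le_mul_of_nonneg_left hca (by positivity : 0 ≤ c * d)]
  have hcad : 0 < c * a * d := by positivity
  linarith [key (by linarith) (by linarith)]

end Coderivative

/-- Theorem 3.4 (ii)(b). Let `r > 0` and `x ∈ K₁⁺` with `‖x‖₁ > r`. Then
for every `d > 0`, the Mordukhovich (Fréchet) coderivative of `P_{rB}` at `(x, (r/‖x‖₁)·x)`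
evaluated at the constant sequence `β_d` satisfies `D̂*P_{rB}(x, (r/‖x‖₁)·x)(β_d) = ∅`. -/
theorem stmt_8 (r : ℝ) (hr : 0 < r) (x : ell1) (hx_pos : ∀ n, 0 < x n)
    (hx : r < ‖x‖) (d : ℝ) (hd : 0 < d) :
    {ψ : ellInfty | inCoderiv (projBall r) x ((r / ‖x‖) • x) ψ (betaSeq d)} = ∅ := by
  have hxnorm : 0 < ‖x‖ := hr.trans hx
  have hc0 : 0 < r / ‖x‖ := div_pos hr hxnorm
  have hc1 : r / ‖x‖ ≤ 1 := (div_le_one hxnorm).2 hx.le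
  have hcr : r / ‖x‖ * ‖x‖ = r := div_mul_cancel₀ r hxnorm.ne'
  refine Set.eq_empty_of_forall_notMem fun ψ hψ => ?_
  have hψ_nonpos := apply_nonpos_of_inCoderiv (fun n => (hx_pos n).le) hc0.le hc1 hcr hψ
  exact not_inCoderiv_of_forall_le hx_pos hc0 hc1 hcr hd (fun _ => le_rfl) hψ_nonpos hψ
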